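/- arXiv:2510.16587 — 2 statements merged into one kernel-verified Lean document; each statement's English description precedes it below -/
import Mathlib

section
/- Let μ and ν be probability measures on a product space X × Y with μ absolutely continuous with respect to ν. Then the KL divergence decomposes as D_KL(μ | ν) = D_KL(μ_X | ν_X) + ∫_X D_KL(μ(·|x) | ν(·|x)) dμ_X(x), where μ_X, ν_X are the marginals on X and μ(·|x), ν(·|x) are the conditional (disintegration) kernels. -/
/-!
Disintegrate `μ = μ_X ⊗ μ(·|x)` and `ν = ν_X ⊗ ν(·|x)`. The chain rule for composition products
(`InformationTheory.klDiv_compProd_eq_add`) splits `D_KL(μ | ν)` into `D_KL(μ_X | ν_X)` plus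
`D_KL(μ_X ⊗ μ(·|x) | μ_X ⊗ ν(·|x))`. For a shared first marginal `m`, the density
`d(m ⊗ κ)/d(m ⊗ η)(x, y)` is the kernel density `dκ/dη(x, y)` as soon as `κ x ≪ η x` for a.e. `x`;
writing KL as the f-divergence `∫ klFun (dμ/dν) dν` and integrating fibrewise then gives
`∫ D_KL(κ x | η x) dm`. If `κ x ≪ η x` fails on a set of positive measure (a measurable set, since
`Y` is countably generated), both sides are `∞`.
-/

open MeasureTheory ProbabilityTheory
open scoped ENNReal NNReal Classical

/-- Kullback–Leibler divergence `D_KL(μ | ν) = ∫ log(dμ/dν) dμ` when `μ ≪ ν` (and the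
integrand is integrable), and `+∞` otherwise. -/

noncomputable def klDiv {α : Type*} [MeasurableSpace α] (μ ν : Measure α) : ℝ≥0∞ :=
  if μ ≪ ν ∧ Integrable (fun x => Real.log (μ.rnDeriv ν x).toReal) μ
  then ENNReal.ofReal (∫ x, Real.log (μ.rnDeriv ν x).toReal ∂μ)
  else ⊤

/-- Mathlib's divergence carries the correction term `ν(univ) - μ(univ)`, which vanishes here. -/
lemma klDiv_eq_informationTheory_klDiv {α : Type*} [MeasurableSpace α] (μ ν : Measure α)
    [IsFiniteMeasure μ] (h : μ Set.univ = ν Set.univ) :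
    klDiv μ ν = InformationTheory.klDiv μ ν := by
  have : IsFiniteMeasure ν := ⟨h ▸ measure_lt_top μ _⟩
  by_cases hμν : μ ≪ ν ∧ Integrable (llr μ ν) μ
  · rw [InformationTheory.klDiv_of_ac_of_integrable hμν.1 hμν.2, measureReal_def,
      measureReal_def, h, add_sub_cancel_right]
    exact if_pos hμν
  · rw [InformationTheory.klDiv_eq_top_iff.mpr fun hac hint ↦ hμν ⟨hac, hint⟩]
    exact if_neg hμν

section CompProdRight

variable {α β : Type*} {mα : MeasurableSpace α} {mβ : MeasurableSpace β}
  [MeasurableSpace.CountableOrCountablyGenerated α β]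
  {μ : Measure α} [IsFiniteMeasure μ] {κ η : Kernel α β} [IsFiniteKernel κ] [IsFiniteKernel η]

lemma MeasureTheory.Measure.rnDeriv_compProd_right (h : ∀ᵐ a ∂μ, κ a ≪ η a) :
    (μ ⊗ₘ κ).rnDeriv (μ ⊗ₘ η) =ᵐ[μ ⊗ₘ η] fun p ↦ κ.rnDeriv η p.1 p.2 := by
  have hκ : μ ⊗ₘ κ = (μ ⊗ₘ η).withDensity fun p ↦ κ.rnDeriv η p.1 p.2 := by
    rw [← Measure.compProd_withDensity (Kernel.measurable_rnDeriv κ η)]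
    refine Measure.compProd_congr ?_
    filter_upwards [h] with a ha using (Kernel.withDensity_rnDeriv_eq ha).symm
  rw [hκ]
  exact Measure.rnDeriv_withDensity _ (by fun_prop)

lemma InformationTheory.klDiv_compProd_right :
    InformationTheory.klDiv (μ ⊗ₘ κ) (μ ⊗ₘ η) =
      ∫⁻ a, InformationTheory.klDiv (κ a) (η a) ∂μ := by
  by_cases hac : ∀ᵐ a ∂μ, κ a ≪ η a
  · have h_density := Measure.rnDeriv_compProd_right hac
    rw [klDiv_eq_lintegral_klFun_of_ac (Measure.AbsolutelyContinuous.compProd_right hac),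
      lintegral_congr_ae (by filter_upwards [h_density] with p hp; rw [hp]),
      Measure.lintegral_compProd (by fun_prop)]
    refine lintegral_congr_ae ?_
    filter_upwards [hac] with a ha
    rw [klDiv_eq_lintegral_klFun_of_ac ha]
    refine lintegral_congr_ae ?_
    filter_upwards [Kernel.rnDeriv_eq_rnDeriv_measure (κ := κ) (η := η) (a := a)] with b hb
    rw [hb]
  · rw [klDiv_of_not_ac (mt Measure.absolutelyContinuous_compProd_right_iff.mp hac)]
    have hS : MeasurableSet {a | ¬ κ a ≪ η a} :=
      (Kernel.measurableSet_absolutelyContinuous κ η).compl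
    refine le_antisymm ?_ le_top
    calc (∞ : ℝ≥0∞) = ∫⁻ a, {a | ¬ κ a ≪ η a}.indicator (fun _ ↦ ∞) a ∂μ := by
          rw [lintegral_indicator_const hS, ENNReal.top_mul (mt ae_iff.mpr hac)]
      _ ≤ ∫⁻ a, InformationTheory.klDiv (κ a) (η a) ∂μ := by
          refine lintegral_mono fun a ↦ ?_
          by_cases ha : κ a ≪ η a <;> simp [ha]

end CompProdRight

theorem kl_div_chain_rule_general
    {X Y : Type*} [MeasurableSpace X]
    [MeasurableSpace Y] [StandardBorelSpace Y] [Nonempty Y]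
    (μ ν : Measure (X × Y)) [IsProbabilityMeasure μ] [IsProbabilityMeasure ν] :
    klDiv μ ν
      = klDiv μ.fst ν.fst
        + ∫⁻ x, klDiv (μ.condKernel x) (ν.condKernel x) ∂μ.fst := by
  simp (disch := simp) only [klDiv_eq_informationTheory_klDiv]
  conv_lhs => rw [← μ.disintegrate μ.condKernel, ← ν.disintegrate ν.condKernel]
  rw [InformationTheory.klDiv_compProd_eq_add, InformationTheory.klDiv_compProd_right]

/-- **Chain rule (disintegration) for KL divergence.** For probability measures `μ ≪ ν` on a
product of standard Borel spaces, `D_KL(μ | ν)` is the KL divergence of the `X`-marginals plus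
the `μ_X`-average of the KL divergences of the conditional (disintegration) kernels. -/
theorem kl_div_chain_rule
    {X Y : Type*} [MeasurableSpace X] [StandardBorelSpace X]
    [MeasurableSpace Y] [StandardBorelSpace Y] [Nonempty Y]
    (μ ν : Measure (X × Y)) [IsProbabilityMeasure μ] [IsProbabilityMeasure ν]
    (hac : μ ≪ ν) :
    klDiv μ ν
      = klDiv μ.fst ν.fst
        + ∫⁻ x, klDiv (μ.condKernel x) (ν.condKernel x) ∂μ.fst :=
  kl_div_chain_rule_general μ ν
end

section
/- Conversely to the product-form characterization: suppose P and P' are two probability densities on ℝ^{d×(k+1)}, both of the form Q_T · ∏_{i=0}^k Ψ_i(x_i) and Q_T · ∏_{i=0}^k Ψ'_i(x_i) respectively for nonnegative measurable potentials, and both have the same marginals ρ_{t_0}, ..., ρ_{t_k}. If additionally both are finite-entropy relative to Q_T, then P = P' almost everywhere. -/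
/-!
Absorbing `ρ0` into the first potential, `P` and `P'` become tilts of the chain density
`∏ qᵢ(xᵢ, xᵢ₊₁)` by products of one-coordinate potentials, and `dP'/dP = exp (ξ + η)` where `ξ`
depends on `x₀` only and `η` on `(x₁, …, x_k)` only. Integrating out `x₀` turns both measures into
tilts of a shorter chain with the same one-dimensional marginals, so by induction on the length the
laws of `(x₁, …, x_k)`, hence of `η`, agree under `P` and `P'`; `ξ` has the same law because `x₀`
does.

Such a density forces `P = P'`. For every `c`, off `{ξ > c} ∪ {η > -c}` the density is `≤ 1` and on
`{ξ > c} ∩ {η > -c}` it is `> 1`; since `{ξ > c}` and `{η > -c}` each have the same mass under `P`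
and `P'`, inclusion–exclusion makes their intersection `P`-null. Letting `c` run over `ℚ` gives
`ξ + η ≤ 0` `P`-a.e., and equality of the total masses then gives `ξ + η = 0` `P`-a.e.
-/

open MeasureTheory ProbabilityTheory
open scoped ENNReal NNReal Classical

section Pushforward
variable {Ω α : Type*} [MeasurableSpace Ω] [MeasurableSpace α] {μ ν : Measure Ω} {f : Ω → α}

theorem measure_preimage_eq_of_map_eq (hf : Measurable f) (h : μ.map f = ν.map f)
    {s : Set α} (hs : MeasurableSet s) : μ (f ⁻¹' s) = ν (f ⁻¹' s) := by
  rw [← Measure.map_apply hf hs, h, Measure.map_apply hf hs]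

theorem ae_comp_of_map_eq (hf : Measurable f) (h : μ.map f = ν.map f) {p : α → Prop}
    (hp : MeasurableSet {a | p a}) (hμ : ∀ᵐ x ∂μ, p (f x)) : ∀ᵐ x ∂ν, p (f x) := by
  rw [← ae_map_iff hf.aemeasurable hp, ← h, ae_map_iff hf.aemeasurable hp]
  exact hμ

theorem map_comp_eq_of_map_eq {γ : Type*} [MeasurableSpace γ] {g : α → γ} (hf : Measurable f)
    (hg : Measurable g) (h : μ.map f = ν.map f) : μ.map (g ∘ f) = ν.map (g ∘ f) := by
  rw [← Measure.map_map hg hf, h, Measure.map_map hg hf]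

theorem eq_of_map_eval_eq_of_unique {β ι : Type*} [MeasurableSpace β] [Unique ι]
    {μ ν : Measure (ι → β)} (h : μ.map (fun x => x default) = ν.map (fun x => x default)) :
    μ = ν :=
  (MeasurableEquiv.funUnique ι β).map_measurableEquiv_injective h

end Pushforward

section SameLaw
variable {Ω : Type*} [MeasurableSpace Ω] {P P' : Measure Ω} [IsFiniteMeasure P] {ξ η : Ω → ℝ}

theorem measure_lt_lt_eq_zero_of_withDensity_exp_add (hξ : Measurable ξ) (hη : Measurable η)
    (hd : P' = P.withDensity fun ω => ENNReal.ofReal (Real.exp (ξ ω + η ω)))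
    (hξlaw : P.map ξ = P'.map ξ) (hηlaw : P.map η = P'.map η) (c : ℝ) :
    P {ω | c < ξ ω ∧ -c < η ω} = 0 := by
  set A := ξ ⁻¹' Set.Ioi c
  set B := η ⁻¹' Set.Ioi (-c)
  have hA : MeasurableSet A := hξ measurableSet_Ioi
  have hB : MeasurableSet B := hη measurableSet_Ioi
  have hAB : MeasurableSet (A ∪ B) := hA.union hB
  have hPA : P' A = P A := (measure_preimage_eq_of_map_eq hξ hξlaw measurableSet_Ioi).symm
  have hPB : P' B = P B := (measure_preimage_eq_of_map_eq hη hηlaw measurableSet_Ioi).symm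
  have huniv : P' Set.univ = P Set.univ :=
    (measure_preimage_eq_of_map_eq hξ hξlaw MeasurableSet.univ).symm
  have hcompl : P' (A ∪ B)ᶜ ≤ P (A ∪ B)ᶜ := by
    rw [hd, withDensity_apply _ hAB.compl, ← setLIntegral_one]
    refine setLIntegral_mono measurable_const fun ω hω => ?_
    simp only [Set.compl_union, Set.mem_inter_iff, Set.mem_compl_iff, Set.mem_preimage,
      Set.mem_Ioi, not_lt, A, B] at hω
    exact ENNReal.ofReal_le_one.2 (Real.exp_le_one_iff.2 (by linarith))
  have hunion : P (A ∪ B) ≤ P' (A ∪ B) := by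
    refine (ENNReal.add_le_add_iff_right (measure_ne_top P (A ∪ B)ᶜ)).1 ?_
    calc P (A ∪ B) + P (A ∪ B)ᶜ = P' (A ∪ B) + P' (A ∪ B)ᶜ := by
          rw [measure_add_measure_compl hAB, measure_add_measure_compl hAB, huniv]
      _ ≤ P' (A ∪ B) + P (A ∪ B)ᶜ := by gcongr
  have hinter : P' (A ∩ B) ≤ P (A ∩ B) := by
    refine (ENNReal.add_le_add_iff_left (measure_ne_top P (A ∪ B))).1 ?_
    calc P (A ∪ B) + P' (A ∩ B) ≤ P' (A ∪ B) + P' (A ∩ B) := by gcongr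
      _ = P (A ∪ B) + P (A ∩ B) := by
          rw [measure_union_add_inter _ hB, measure_union_add_inter _ hB, hPA, hPB]
  by_contra hpos
  refine hinter.not_gt ?_
  rw [hd, withDensity_apply _ (hA.inter hB), ← setLIntegral_one]
  refine setLIntegral_strict_mono (hA.inter hB) hpos (by fun_prop) (by simp) ?_
  refine Filter.Eventually.of_forall fun ω hω => ?_
  simp only [Set.mem_inter_iff, Set.mem_preimage, Set.mem_Ioi, A, B] at hω
  exact ENNReal.one_lt_ofReal.2 (Real.one_lt_exp_iff.2 (by linarith))

theorem ae_add_nonpos_of_withDensity_exp_add (hξ : Measurable ξ) (hη : Measurable η)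
    (hd : P' = P.withDensity fun ω => ENNReal.ofReal (Real.exp (ξ ω + η ω)))
    (hξlaw : P.map ξ = P'.map ξ) (hηlaw : P.map η = P'.map η) :
    ∀ᵐ ω ∂P, ξ ω + η ω ≤ 0 := by
  have hnull : ∀ᵐ ω ∂P, ∀ c : ℚ, ¬((c : ℝ) < ξ ω ∧ -(c : ℝ) < η ω) :=
    ae_all_iff.2 fun c => measure_eq_zero_iff_ae_notMem.1
      (measure_lt_lt_eq_zero_of_withDensity_exp_add hξ hη hd hξlaw hηlaw c)
  filter_upwards [hnull] with ω hω
  by_contra! hpos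
  obtain ⟨c, hξc, hcη⟩ := exists_rat_btwn (show -η ω < ξ ω by linarith)
  exact hω c ⟨hcη, by linarith⟩

theorem eq_of_withDensity_exp_add_of_map_eq (hξ : Measurable ξ) (hη : Measurable η)
    (hd : P' = P.withDensity fun ω => ENNReal.ofReal (Real.exp (ξ ω + η ω)))
    (hξlaw : P.map ξ = P'.map ξ) (hηlaw : P.map η = P'.map η) : P = P' := by
  have hle : (fun ω => ENNReal.ofReal (Real.exp (ξ ω + η ω))) ≤ᵐ[P] 1 := by
    filter_upwards [ae_add_nonpos_of_withDensity_exp_add hξ hη hd hξlaw hηlaw] with ω hω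
    exact ENNReal.ofReal_le_one.2 (Real.exp_le_one_iff.2 hω)
  have hmass : ∫⁻ ω, ENNReal.ofReal (Real.exp (ξ ω + η ω)) ∂P = ∫⁻ _, 1 ∂P := by
    rw [← setLIntegral_univ, ← withDensity_apply _ MeasurableSet.univ, ← hd, lintegral_one]
    exact (measure_preimage_eq_of_map_eq hξ hξlaw MeasurableSet.univ).symm
  have hone := ae_eq_of_ae_le_of_lintegral_le hle (by simp [hmass]) aemeasurable_const hmass.ge
  rw [hd, withDensity_congr_ae hone, withDensity_one]

end SameLaw

theorem ae_ne_zero_ne_top_withDensity {α : Type*} [MeasurableSpace α] {μ : Measure α}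
    {f : α → ℝ≥0∞} (hf : Measurable f) [IsFiniteMeasure (μ.withDensity f)] :
    ∀ᵐ x ∂μ.withDensity f, f x ≠ 0 ∧ f x ≠ ∞ := by
  have hfin : ∫⁻ x, f x ∂μ ≠ ∞ := by
    rw [← setLIntegral_univ, ← withDensity_apply _ MeasurableSet.univ]
    exact measure_ne_top _ _
  rw [ae_withDensity_iff hf]
  filter_upwards [ae_lt_top hf hfin] with x hx hx0 using ⟨hx0, hx.ne⟩

theorem ENNReal.ne_zero_ne_top_of_prod {ι : Type*} [Fintype ι] {a : ι → ℝ≥0∞}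
    (h0 : ∏ i, a i ≠ 0) (htop : ∏ i, a i ≠ ∞) (i : ι) : a i ≠ 0 ∧ a i ≠ ∞ := by
  have hne : ∀ j ∈ Finset.univ, a j ≠ 0 := Finset.prod_ne_zero_iff.1 h0
  exact ⟨hne i (Finset.mem_univ i),
    fun hi => htop (WithTop.prod_eq_top (Finset.mem_univ i) hi hne)⟩

theorem ENNReal.eq_mul_ofReal_exp_log_sub {a b : ℝ≥0∞} (ha0 : a ≠ 0) (ha : a ≠ ∞)
    (hb0 : b ≠ 0) (hb : b ≠ ∞) :
    b = a * ENNReal.ofReal (Real.exp (Real.log b.toReal - Real.log a.toReal)) := by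
  rw [Real.exp_sub, Real.exp_log (ENNReal.toReal_pos hb0 hb),
    Real.exp_log (ENNReal.toReal_pos ha0 ha),
    ENNReal.ofReal_div_of_pos (ENNReal.toReal_pos ha0 ha), ENNReal.ofReal_toReal hb,
    ENNReal.ofReal_toReal ha, ENNReal.mul_div_cancel ha0 ha]

section LogRatio
variable {β ι : Type*} [Fintype ι]

noncomputable def logRatio (φ φ' : β → ℝ≥0∞) (a : β) : ℝ :=
  Real.log (φ' a).toReal - Real.log (φ a).toReal

theorem prod_eq_prod_mul_ofReal_exp_sum_logRatio {Ψ Ψ' : ι → β → ℝ≥0∞} {x : ι → β}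
    (h : ∀ i, Ψ i (x i) ≠ 0 ∧ Ψ i (x i) ≠ ∞) (h' : ∀ i, Ψ' i (x i) ≠ 0 ∧ Ψ' i (x i) ≠ ∞) :
    ∏ i, Ψ' i (x i)
      = (∏ i, Ψ i (x i)) * ENNReal.ofReal (Real.exp (∑ i, logRatio (Ψ i) (Ψ' i) (x i))) := by
  rw [Real.exp_sum, ENNReal.ofReal_prod_of_nonneg fun i _ => (Real.exp_pos _).le,
    ← Finset.prod_mul_distrib]
  exact Finset.prod_congr rfl fun i _ =>
    ENNReal.eq_mul_ofReal_exp_log_sub (h i).1 (h i).2 (h' i).1 (h' i).2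

variable [MeasurableSpace β]

theorem measurable_logRatio {φ φ' : β → ℝ≥0∞} (hφ : Measurable φ) (hφ' : Measurable φ') :
    Measurable (logRatio φ φ') := by
  unfold logRatio; fun_prop

theorem ae_ne_zero_ne_top_of_eq_withDensity_prod {Q P : Measure (ι → β)} [IsFiniteMeasure P]
    {Ψ : ι → β → ℝ≥0∞} (hΨ : ∀ i, Measurable (Ψ i))
    (hP : P = Q.withDensity fun x => ∏ i, Ψ i (x i)) :
    ∀ᵐ x ∂P, ∀ i, Ψ i (x i) ≠ 0 ∧ Ψ i (x i) ≠ ∞ := by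
  subst hP
  filter_upwards [ae_ne_zero_ne_top_withDensity (by fun_prop)] with x hx
  exact ENNReal.ne_zero_ne_top_of_prod hx.1 hx.2

theorem ae_ne_zero_ne_top_of_map_eval_eq {μ ν : Measure (ι → β)}
    (h : ∀ i, μ.map (fun x => x i) = ν.map (fun x => x i)) {φ : ι → β → ℝ≥0∞}
    (hφ : ∀ i, Measurable (φ i)) (hμ : ∀ᵐ x ∂μ, ∀ i, φ i (x i) ≠ 0 ∧ φ i (x i) ≠ ∞) :
    ∀ᵐ x ∂ν, ∀ i, φ i (x i) ≠ 0 ∧ φ i (x i) ≠ ∞ :=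
  ae_all_iff.2 fun i => ae_comp_of_map_eq (measurable_pi_apply i) (h i)
    (((hφ i) (measurableSet_singleton 0)).compl.inter ((hφ i) (measurableSet_singleton ∞)).compl)
    (ae_all_iff.1 hμ i)

theorem eq_withDensity_exp_sum_logRatio {Q P P' : Measure (ι → β)} [IsFiniteMeasure P]
    [IsFiniteMeasure P'] {Ψ Ψ' : ι → β → ℝ≥0∞} (hΨ : ∀ i, Measurable (Ψ i))
    (hΨ' : ∀ i, Measurable (Ψ' i)) (hP : P = Q.withDensity fun x => ∏ i, Ψ i (x i))
    (hP' : P' = Q.withDensity fun x => ∏ i, Ψ' i (x i))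
    (hmarg : ∀ i, P.map (fun x => x i) = P'.map (fun x => x i)) :
    P' = P.withDensity fun x => ENNReal.ofReal (Real.exp (∑ i, logRatio (Ψ i) (Ψ' i) (x i))) := by
  set E : (ι → β) → ℝ≥0∞ := fun x => ENNReal.ofReal (Real.exp (∑ i, logRatio (Ψ i) (Ψ' i) (x i)))
  have hE : Measurable E := by
    have := fun i => measurable_logRatio (hΨ i) (hΨ' i)
    fun_prop
  have hgood := ae_ne_zero_ne_top_of_eq_withDensity_prod hΨ hP
  have hgood' := ae_ne_zero_ne_top_of_eq_withDensity_prod hΨ' hP'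
  have hP_good :=
    hgood.and (ae_ne_zero_ne_top_of_map_eval_eq (fun i => (hmarg i).symm) hΨ' hgood')
  have hP'_good := (ae_ne_zero_ne_top_of_map_eval_eq hmarg hΨ hgood).and hgood'
  rw [hP, ae_withDensity_iff (by fun_prop)] at hP_good
  rw [hP', ae_withDensity_iff (by fun_prop)] at hP'_good
  have hdens : (fun x => ∏ i, Ψ' i (x i)) =ᵐ[Q] fun x => (∏ i, Ψ i (x i)) * E x := by
    filter_upwards [hP_good, hP'_good] with x h h'
    by_cases hx : (∀ i, Ψ i (x i) ≠ 0 ∧ Ψ i (x i) ≠ ∞) ∧ ∀ i, Ψ' i (x i) ≠ 0 ∧ Ψ' i (x i) ≠ ∞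
    · exact prod_eq_prod_mul_ofReal_exp_sum_logRatio hx.1 hx.2
    · rw [not_imp_comm.1 h hx, not_imp_comm.1 h' hx, zero_mul]
  rw [hP', withDensity_congr_ae hdens, hP, ← withDensity_mul _ (by fun_prop) hE]
  rfl

end LogRatio

section PiTail
variable {β : Type*} [MeasurableSpace β] (μ : Measure β) [SigmaFinite μ] {n : ℕ}

theorem measurable_fin_tail : Measurable (Fin.tail : (Fin (n + 1) → β) → Fin n → β) :=
  measurable_pi_lambda _ fun _ => measurable_pi_apply _

theorem map_tail_withDensity_pi {D : (Fin (n + 1) → β) → ℝ≥0∞} (hD : Measurable D) :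
    ((Measure.pi fun _ => μ).withDensity D).map Fin.tail
      = (Measure.pi fun _ => μ).withDensity fun y => ∫⁻ t, D (Fin.cons t y) ∂μ := by
  have hcons := (measurePreserving_piFinSuccAbove (fun _ : Fin (n + 1) => μ) 0).symm
  ext s hs
  have htail := measurable_fin_tail (β := β) (n := n) hs
  rw [Measure.map_apply measurable_fin_tail hs, withDensity_apply _ htail, withDensity_apply _ hs,
    ← lintegral_indicator htail, ← hcons.lintegral_comp_emb (MeasurableEquiv.measurableEmbedding _),
    lintegral_prod_symm, ← lintegral_indicator hs]
  · congr 1 with y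
    by_cases hy : y ∈ s <;> simp [hy, Fin.consEquiv]
  · exact ((hD.indicator htail).comp (MeasurableEquiv.measurable _)).aemeasurable

end PiTail

section MarkovChain
variable {β : Type*} {n : ℕ}

noncomputable def chainWeight (q : Fin n → β → β → ℝ≥0∞) (x : Fin (n + 1) → β) : ℝ≥0∞ :=
  ∏ i : Fin n, q i (x i.castSucc) (x i.succ)

theorem chainWeight_cons (q : Fin (n + 1) → β → β → ℝ≥0∞) (t : β) (y : Fin (n + 1) → β) :
    chainWeight q (Fin.cons t y) = q 0 t (y 0) * chainWeight (Fin.tail q) y := by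
  simp only [chainWeight, Fin.prod_univ_succ, Fin.castSucc_zero, Fin.cons_zero, Fin.cons_succ,
    ← Fin.succ_castSucc]
  rfl

variable [MeasurableSpace β]

theorem measurable_chainWeight {q : Fin n → β → β → ℝ≥0∞}
    (hq : ∀ i, Measurable (Function.uncurry (q i))) : Measurable (chainWeight q) := by
  unfold chainWeight; fun_prop

noncomputable def collapsePotential (μ : Measure β) (q : Fin (n + 1) → β → β → ℝ≥0∞)
    (Ψ : Fin (n + 2) → β → ℝ≥0∞) : Fin (n + 1) → β → ℝ≥0∞ :=
  Fin.cons (fun a => (∫⁻ t, Ψ 0 t * q 0 t a ∂μ) * Ψ 1 a) (Fin.tail (Fin.tail Ψ))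

theorem measurable_collapsePotential (μ : Measure β) [SFinite μ]
    {q : Fin (n + 1) → β → β → ℝ≥0∞} {Ψ : Fin (n + 2) → β → ℝ≥0∞}
    (hq : ∀ i, Measurable (Function.uncurry (q i))) (hΨ : ∀ i, Measurable (Ψ i)) (i : Fin (n + 1)) :
    Measurable (collapsePotential μ q Ψ i) := by
  refine Fin.cases ?_ (fun j => hΨ j.succ.succ) i
  have hint : Measurable fun p : β × β => Ψ 0 p.2 * q 0 p.2 p.1 := by fun_prop
  exact hint.lintegral_prod_right'.mul (hΨ 1)

theorem map_tail_withDensity_chainWeight (μ : Measure β) [SigmaFinite μ]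
    {q : Fin (n + 1) → β → β → ℝ≥0∞} {Ψ : Fin (n + 2) → β → ℝ≥0∞}
    (hq : ∀ i, Measurable (Function.uncurry (q i))) (hΨ : ∀ i, Measurable (Ψ i)) :
    (((Measure.pi fun _ => μ).withDensity (chainWeight q)).withDensity
        fun x => ∏ i, Ψ i (x i)).map Fin.tail
      = ((Measure.pi fun _ => μ).withDensity (chainWeight (Fin.tail q))).withDensity
        fun y => ∏ i, collapsePotential μ q Ψ i (y i) := by
  have hchain := measurable_chainWeight hq
  have hchain' := measurable_chainWeight (q := Fin.tail q) fun i => hq i.succ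
  have hcollapse := measurable_collapsePotential μ hq hΨ
  rw [← withDensity_mul _ hchain (by fun_prop), ← withDensity_mul _ hchain' (by fun_prop),
    map_tail_withDensity_pi μ (hchain.mul (by fun_prop))]
  congr 1 with y
  calc ∫⁻ t, (chainWeight q * fun x : Fin (n + 2) → β => ∏ i, Ψ i (x i)) (Fin.cons t y) ∂μ
      = (∫⁻ t, Ψ 0 t * q 0 t (y 0) ∂μ) * (chainWeight (Fin.tail q) y * ∏ i, Ψ i.succ (y i)) := by
        rw [← lintegral_mul_const _ (by fun_prop)]
        congr 1 with t
        simp only [Pi.mul_apply, chainWeight_cons, Fin.prod_univ_succ (n := n + 1),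
          Fin.cons_zero, Fin.cons_succ]
        ring
    _ = chainWeight (Fin.tail q) y * ∏ i, collapsePotential μ q Ψ i (y i) := by
        simp only [collapsePotential, Fin.prod_univ_succ (n := n), Fin.cons_zero, Fin.cons_succ,
          Fin.tail, Fin.succ_zero_eq_one]
        ring

end MarkovChain

theorem eq_of_withDensity_chainWeight_of_map_eval_eq {β : Type*} [MeasurableSpace β]
    (μ : Measure β) [SigmaFinite μ] {n : ℕ} {q : Fin n → β → β → ℝ≥0∞}
    {Ψ Ψ' : Fin (n + 1) → β → ℝ≥0∞} {P P' : Measure (Fin (n + 1) → β)} [IsFiniteMeasure P]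
    [IsFiniteMeasure P'] (hq : ∀ i, Measurable (Function.uncurry (q i)))
    (hΨ : ∀ i, Measurable (Ψ i)) (hΨ' : ∀ i, Measurable (Ψ' i))
    (hP : P = ((Measure.pi fun _ => μ).withDensity (chainWeight q)).withDensity
      fun x => ∏ i, Ψ i (x i))
    (hP' : P' = ((Measure.pi fun _ => μ).withDensity (chainWeight q)).withDensity
      fun x => ∏ i, Ψ' i (x i))
    (hmarg : ∀ i, P.map (fun x => x i) = P'.map (fun x => x i)) :
    P = P' := by
  induction n with
  | zero => exact eq_of_map_eval_eq_of_unique (ι := Fin 1) (hmarg 0)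
  | succ n ih =>
    have htail : P.map Fin.tail = P'.map Fin.tail := by
      refine ih (q := Fin.tail q) (fun i => hq i.succ) (measurable_collapsePotential μ hq hΨ)
        (measurable_collapsePotential μ hq hΨ')
        (by rw [hP, map_tail_withDensity_chainWeight μ hq hΨ])
        (by rw [hP', map_tail_withDensity_chainWeight μ hq hΨ']) fun j => ?_
      rw [Measure.map_map (measurable_pi_apply j) measurable_fin_tail,
        Measure.map_map (measurable_pi_apply j) measurable_fin_tail]
      exact hmarg j.succ
    have hratio := eq_withDensity_exp_sum_logRatio hΨ hΨ' hP hP' hmarg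
    simp_rw [Fin.sum_univ_succ (n := n + 1)] at hratio
    have hL := fun i => measurable_logRatio (hΨ i) (hΨ' i)
    refine eq_of_withDensity_exp_add_of_map_eq (by fun_prop) (by fun_prop) hratio ?_ ?_
    · exact map_comp_eq_of_map_eq (g := logRatio (Ψ 0) (Ψ' 0)) (measurable_pi_apply 0) (hL 0)
        (hmarg 0)
    · exact map_comp_eq_of_map_eq (g := fun y => ∑ i, logRatio (Ψ i.succ) (Ψ' i.succ) (y i))
        measurable_fin_tail (by fun_prop) htail

section Absorb
variable {β : Type*} [MeasurableSpace β] {n : ℕ} {ρ : β → ℝ≥0∞} {Ψ : Fin (n + 1) → β → ℝ≥0∞}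

theorem measurable_cons_mul_tail (hρ : Measurable ρ) (hΨ : ∀ i, Measurable (Ψ i))
    (i : Fin (n + 1)) :
    Measurable (Fin.cons (ρ * Ψ 0) (Fin.tail Ψ) i : β → ℝ≥0∞) :=
  Fin.cases (hρ.mul (hΨ 0)) (fun j => hΨ j.succ) i

theorem withDensity_mul_eval_zero_withDensity_prod (μ : Measure (Fin (n + 1) → β))
    {D : (Fin (n + 1) → β) → ℝ≥0∞} (hρ : Measurable ρ) (hD : Measurable D)
    (hΨ : ∀ i, Measurable (Ψ i)) :
    (μ.withDensity fun x => ρ (x 0) * D x).withDensity (fun x => ∏ i, Ψ i (x i))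
      = (μ.withDensity D).withDensity fun x => ∏ i, Fin.cons (ρ * Ψ 0) (Fin.tail Ψ) i (x i) := by
  have hcons := measurable_cons_mul_tail hρ hΨ
  rw [← withDensity_mul _ (by fun_prop) (by fun_prop), ← withDensity_mul _ hD (by fun_prop)]
  congr 1 with x
  simp only [Pi.mul_apply, Fin.prod_univ_succ (n := n), Fin.cons_zero, Fin.cons_succ, Fin.tail]
  ring

end Absorb

theorem multimarginal_schroedinger_uniqueness_general (d k : ℕ)
    (ρ0 : (Fin d → ℝ) → ℝ≥0∞) (q : Fin k → (Fin d → ℝ) → (Fin d → ℝ) → ℝ≥0∞)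
    (hρ0 : Measurable ρ0) (hq : ∀ i, Measurable (Function.uncurry (q i)))
    (Q : Measure (Fin (k + 1) → Fin d → ℝ))
    (hQ : Q = volume.withDensity
      (fun x => ρ0 (x 0) * ∏ i : Fin k, q i (x i.castSucc) (x i.succ)))
    (Ψ Ψ' : Fin (k + 1) → (Fin d → ℝ) → ℝ≥0∞)
    (hΨ : ∀ i, Measurable (Ψ i)) (hΨ' : ∀ i, Measurable (Ψ' i))
    (P P' : Measure (Fin (k + 1) → Fin d → ℝ))
    [IsProbabilityMeasure P] [IsProbabilityMeasure P']
    (hP : P = Q.withDensity (fun x => ∏ i, Ψ i (x i)))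
    (hP' : P' = Q.withDensity (fun x => ∏ i, Ψ' i (x i)))
    (hmarg : ∀ i, P.map (fun x => x i) = P'.map (fun x => x i)) :
    P = P' := by
  refine eq_of_withDensity_chainWeight_of_map_eval_eq volume hq
    (measurable_cons_mul_tail hρ0 hΨ) (measurable_cons_mul_tail hρ0 hΨ') ?_ ?_ hmarg
  · rw [hP, hQ]
    exact withDensity_mul_eval_zero_withDensity_prod _ hρ0 (measurable_chainWeight hq) hΨ
  · rw [hP', hQ]
    exact withDensity_mul_eval_zero_withDensity_prod _ hρ0 (measurable_chainWeight hq) hΨ'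

/-- **Uniqueness in the multi-marginal Schrödinger system.** Let `Q` be a probability measure
on `(ℝ^d)^(k+1)` with strictly positive Markov-chain-form density
`ρ0 (x 0) * ∏ i, q i (x i) (x (i+1))` w.r.t. Lebesgue measure. If `P` and `P'` are two
probability measures obtained from `Q` by reweighting with products of one-coordinate
potentials, have the same marginals, and have finite relative entropy w.r.t. `Q`,
then `P = P'`. -/
theorem multimarginal_schroedinger_uniqueness (d k : ℕ)
    (ρ0 : (Fin d → ℝ) → ℝ≥0∞) (q : Fin k → (Fin d → ℝ) → (Fin d → ℝ) → ℝ≥0∞)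
    (hρ0 : Measurable ρ0) (hq : ∀ i, Measurable (Function.uncurry (q i)))
    (hρ0pos : ∀ a, 0 < ρ0 a) (hqpos : ∀ i a b, 0 < q i a b)
    (Q : Measure (Fin (k + 1) → Fin d → ℝ))
    (hQ : Q = volume.withDensity
      (fun x => ρ0 (x 0) * ∏ i : Fin k, q i (x i.castSucc) (x i.succ)))
    [IsProbabilityMeasure Q]
    (Ψ Ψ' : Fin (k + 1) → (Fin d → ℝ) → ℝ≥0∞)
    (hΨ : ∀ i, Measurable (Ψ i)) (hΨ' : ∀ i, Measurable (Ψ' i))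
    (P P' : Measure (Fin (k + 1) → Fin d → ℝ))
    [IsProbabilityMeasure P] [IsProbabilityMeasure P']
    (hP : P = Q.withDensity (fun x => ∏ i, Ψ i (x i)))
    (hP' : P' = Q.withDensity (fun x => ∏ i, Ψ' i (x i)))
    (hmarg : ∀ i, P.map (fun x => x i) = P'.map (fun x => x i))
    (hfinP : klDiv P Q ≠ ⊤) (hfinP' : klDiv P' Q ≠ ⊤) :
    P = P' :=
  multimarginal_schroedinger_uniqueness_general d k ρ0 q hρ0 hq Q hQ Ψ Ψ' hΨ hΨ' P P' hP hP' hmarg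
end
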